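/- arXiv:1702.02669 — 4 statements merged into one kernel-verified Lean document; each statement's English description precedes it below -/
import Mathlib

section
/- Let p be a prime and let x₁, x₂, x₃ ∈ pℤ_p. Define F : ℤ_p³ → ℤ_p³ by F(x₁,x₂,x₃) = (x₁ + 2x₂x₃ + 2x₁x₂x₃, −x₃(1+x₁), x₂(1+x₁)(1+2x₃)). Then the Jacobian determinant of F at (x₁,x₂,x₃) (the determinant of the matrix of formal partial derivatives) is a unit in ℤ_p. -/
/-!
Reducing modulo the maximal ideal sends the Jacobian matrix at a point of `(pℤ_p)³` to its value
at the origin, `!![1, 0, 0; 0, 0, -1; 0, 1, 0]`, whose determinant is `1`. Since `ℤ_p` is local,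
an element whose residue is a unit is itself a unit.
-/

open IsLocalRing

theorem Matrix.isUnit_det_of_isUnit_det_map_residue {R n : Type*} [CommRing R] [IsLocalRing R]
    [Fintype n] [DecidableEq n] (M : Matrix n n R) (h : IsUnit (M.map (residue R)).det) :
    IsUnit M.det := by
  rw [← RingHom.mapMatrix_apply, ← RingHom.map_det] at h
  exact (isUnit_map_iff (residue R) _).mp h

/-- The Jacobian matrix of
`F(x₁, x₂, x₃) = (x₁ + 2x₂x₃ + 2x₁x₂x₃, -x₃(1 + x₁), x₂(1 + x₁)(1 + 2x₃))`. -/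
def orbitJacobian {R : Type*} [CommRing R] (x₁ x₂ x₃ : R) : Matrix (Fin 3) (Fin 3) R :=
  !![1 + 2 * x₂ * x₃, 2 * x₃ + 2 * x₁ * x₃, 2 * x₂ + 2 * x₁ * x₂;
     -x₃, 0, -(1 + x₁);
     x₂ * (1 + 2 * x₃), (1 + x₁) * (1 + 2 * x₃), 2 * x₂ * (1 + x₁)]

theorem orbitJacobian_map {R S : Type*} [CommRing R] [CommRing S] (f : R →+* S)
    (x₁ x₂ x₃ : R) : (orbitJacobian x₁ x₂ x₃).map f = orbitJacobian (f x₁) (f x₂) (f x₃) := by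
  ext i j
  fin_cases i <;> fin_cases j <;> simp [orbitJacobian, map_ofNat]

theorem det_orbitJacobian_zero (R : Type*) [CommRing R] : (orbitJacobian (0 : R) 0 0).det = 1 := by
  simp [orbitJacobian, Matrix.det_fin_three]

theorem isUnit_det_orbitJacobian {R : Type*} [CommRing R] [IsLocalRing R] {x₁ x₂ x₃ : R}
    (h₁ : x₁ ∈ maximalIdeal R) (h₂ : x₂ ∈ maximalIdeal R) (h₃ : x₃ ∈ maximalIdeal R) :
    IsUnit (orbitJacobian x₁ x₂ x₃).det := by
  apply Matrix.isUnit_det_of_isUnit_det_map_residue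
  rw [orbitJacobian_map, (residue_eq_zero_iff _).mpr h₁, (residue_eq_zero_iff _).mpr h₂,
    (residue_eq_zero_iff _).mpr h₃, det_orbitJacobian_zero]
  exact isUnit_one

/-- The Jacobian determinant of F(x₁,x₂,x₃) = (x₁+2x₂x₃+2x₁x₂x₃, −x₃(1+x₁),
x₂(1+x₁)(1+2x₃)) at a point of (pℤ_p)³ is a unit of ℤ_p. -/
theorem stmt_10 (p : ℕ) [Fact p.Prime] (x₁ x₂ x₃ : ℤ_[p])
    (h₁ : x₁ ∈ Ideal.span {(p : ℤ_[p])}) (h₂ : x₂ ∈ Ideal.span {(p : ℤ_[p])})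
    (h₃ : x₃ ∈ Ideal.span {(p : ℤ_[p])}) :
    IsUnit (Matrix.det
      !![1 + 2 * x₂ * x₃, 2 * x₃ + 2 * x₁ * x₃, 2 * x₂ + 2 * x₁ * x₂;
         -x₃, 0, -(1 + x₁);
         x₂ * (1 + 2 * x₃), (1 + x₁) * (1 + 2 * x₃), 2 * x₂ * (1 + x₁)]) := by
  rw [← PadicInt.maximalIdeal_eq_span_p] at h₁ h₂ h₃
  exact isUnit_det_orbitJacobian h₁ h₂ h₃
end

section
/- Let p be a prime, m, n ≥ 1 integers, and set M := (p^m ℤ_p)^n. Let f₁, …, f_n ∈ ℤ_p[X₁,…,X_n] with f_i(0) = 0 for all i, and let f : M → ℤ_p^n be the induced map. Assume the Jacobian determinant J := det(∂f_i/∂X_j), evaluated at any point of M, lies in ℤ_p^×. Then f maps M into M and the restricted map f : M → M is a bijection. -/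
/-!
Let `L` be the Jacobian matrix at `0`. Since `det L` is a unit of `ℤ_[p]`, both `L` and `L⁻¹` have
integral entries, so `v ↦ L v` maps every ball `closedBall 0 r` of `(ℤ_[p])ⁿ` bijectively onto
itself. Writing `F x = L x + R x`, every component of `R` lies in the square of the ideal of
polynomials vanishing at `0`, and the ultrametric inequality gives `‖R x - R y‖ ≤ r ‖x - y‖` on
`closedBall 0 r`. With `r = p^{-m} < 1` this ball is `M`, so `L⁻¹ ∘ F` is the identity plus a
contraction of `M` fixing `0`, and such a map is a bijection of `M` by the Banach fixed point
theorem.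
-/

open MvPolynomial Matrix Metric Set

namespace MvPolynomial

theorem sub_linearPart_mem_ker_eval_zero_sq {R σ : Type*} [CommRing R] [Fintype σ]
    (q : MvPolynomial σ R) :
    q - C (eval 0 q) - ∑ j, C (eval 0 (pderiv j q)) * X j ∈
      RingHom.ker (eval (0 : σ → R)) ^ 2 := by
  classical
  induction q using MvPolynomial.induction_on with
  | C a => simp
  | add f g hf hg =>
    convert add_mem hf hg using 1
    simp only [map_add, Finset.sum_add_distrib, add_mul]
    ring
  | mul_X f i hf =>
    have hlin : f * X i - C (eval 0 (f * X i)) - ∑ j, C (eval 0 (pderiv j (f * X i))) * X j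
        = (f - C (eval 0 f)) * X i := by
      simp [Derivation.leibniz, pderiv_X, Pi.single_apply, sub_mul, apply_ite, ite_mul]
    rw [hlin, sq]
    exact Ideal.mul_mem_mul (by simp) (by simp)

variable {p : ℕ} [Fact p.Prime] {σ : Type*} [Fintype σ]

theorem norm_eval_sub_eval_le (q : MvPolynomial σ ℤ_[p]) (x y : σ → ℤ_[p]) :
    ‖eval x q - eval y q‖ ≤ ‖x - y‖ := by
  induction q using MvPolynomial.induction_on with
  | C a => simp
  | add f g hf hg =>
    rw [map_add, map_add, add_sub_add_comm]
    exact (IsUltrametricDist.norm_add_le_max _ _).trans (max_le hf hg)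
  | mul_X f i hf =>
    rw [map_mul, map_mul, eval_X, eval_X,
      show eval x f * x i - eval y f * y i = eval x f * (x i - y i) + (eval x f - eval y f) * y i
        by ring]
    refine (IsUltrametricDist.norm_add_le_max _ _).trans (max_le ?_ ?_) <;> rw [norm_mul]
    · exact mul_le_of_le_one_left (norm_nonneg _) (PadicInt.norm_le_one _) |>.trans
        (norm_le_pi_norm (x - y) i)
    · exact mul_le_of_le_one_right (norm_nonneg _) (PadicInt.norm_le_one _) |>.trans hf

theorem norm_eval_le_of_mem_ker {q : MvPolynomial σ ℤ_[p]} (hq : q ∈ RingHom.ker (eval 0))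
    (x : σ → ℤ_[p]) : ‖eval x q‖ ≤ ‖x‖ := by
  have := norm_eval_sub_eval_le q x 0
  rwa [RingHom.mem_ker.mp hq, sub_zero, sub_zero] at this

theorem norm_eval_sub_eval_le_of_mem_ker_sq {q : MvPolynomial σ ℤ_[p]}
    (hq : q ∈ RingHom.ker (eval 0) ^ 2) (x y : σ → ℤ_[p]) :
    ‖eval x q - eval y q‖ ≤ max ‖x‖ ‖y‖ * ‖x - y‖ := by
  rw [sq] at hq
  refine Submodule.mul_induction_on hq (fun a ha b hb => ?_) (fun a b ha hb => ?_)
  · rw [map_mul, map_mul, show eval x a * eval x b - eval y a * eval y b =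
      eval x a * (eval x b - eval y b) + (eval x a - eval y a) * eval y b by ring]
    refine (IsUltrametricDist.norm_add_le_max _ _).trans (max_le ?_ ?_) <;> rw [norm_mul]
    · exact mul_le_mul ((norm_eval_le_of_mem_ker ha x).trans (le_max_left _ _))
        (norm_eval_sub_eval_le b x y) (norm_nonneg _) (by positivity)
    · rw [mul_comm]
      exact mul_le_mul ((norm_eval_le_of_mem_ker hb y).trans (le_max_right _ _))
        (norm_eval_sub_eval_le a x y) (norm_nonneg _) (by positivity)
  · rw [map_add, map_add, add_sub_add_comm]
    exact (IsUltrametricDist.norm_add_le_max _ _).trans (max_le ha hb)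

theorem lipschitzOnWith_eval_of_mem_ker_sq {ι : Type*} [Fintype ι]
    {Q : ι → MvPolynomial σ ℤ_[p]} (hQ : ∀ i, Q i ∈ RingHom.ker (eval 0) ^ 2) (r : NNReal) :
    LipschitzOnWith r (fun x i => eval x (Q i)) (closedBall 0 r) := by
  refine lipschitzOnWith_iff_norm_sub_le.mpr fun x hx y hy => ?_
  refine (pi_norm_le_iff_of_nonneg (by positivity)).mpr fun i => ?_
  refine (norm_eval_sub_eval_le_of_mem_ker_sq (hQ i) x y).trans ?_
  gcongr
  exact max_le (mem_closedBall_zero_iff.mp hx) (mem_closedBall_zero_iff.mp hy)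

end MvPolynomial

namespace Matrix

variable {p : ℕ} [Fact p.Prime] {m n : Type*} [Fintype m] [Fintype n]

theorem norm_mulVec_le (A : Matrix m n ℤ_[p]) (v : n → ℤ_[p]) : ‖A *ᵥ v‖ ≤ ‖v‖ :=
  (pi_norm_le_iff_of_nonneg (norm_nonneg v)).mpr fun _ =>
    IsUltrametricDist.norm_sum_le_of_forall_le_of_nonneg (norm_nonneg v) fun j _ => by
      rw [norm_mul]
      exact mul_le_of_le_one_left (norm_nonneg _) (PadicInt.norm_le_one _) |>.trans
        (norm_le_pi_norm v j)

theorem lipschitzWith_mulVec (A : Matrix m n ℤ_[p]) : LipschitzWith 1 (A *ᵥ ·) :=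
  lipschitzWith_iff_norm_sub_le.mpr fun v w => by
    simpa [← mulVec_sub] using norm_mulVec_le A (v - w)

theorem mapsTo_mulVec_closedBall (A : Matrix m n ℤ_[p]) (r : ℝ) :
    MapsTo (A *ᵥ ·) (closedBall 0 r) (closedBall 0 r) := fun v hv =>
  mem_closedBall_zero_iff.mpr ((norm_mulVec_le A v).trans (mem_closedBall_zero_iff.mp hv))

theorem bijOn_mulVec_closedBall [DecidableEq n] {A : Matrix n n ℤ_[p]} (hA : IsUnit A.det)
    (r : ℝ) : BijOn (A *ᵥ ·) (closedBall 0 r) (closedBall 0 r) :=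
  InvOn.bijOn (f' := (A⁻¹ *ᵥ ·))
    ⟨fun v _ => by simp [mulVec_mulVec, nonsing_inv_mul A hA],
      fun v _ => by simp [mulVec_mulVec, mul_nonsing_inv A hA]⟩
    (mapsTo_mulVec_closedBall A r) (mapsTo_mulVec_closedBall A⁻¹ r)

end Matrix

theorem MvPolynomial.lipschitzOnWith_inv_jacobian_mulVec_sub_id {p : ℕ} [Fact p.Prime]
    {σ : Type*} [Fintype σ] [DecidableEq σ] {F : σ → MvPolynomial σ ℤ_[p]}
    (h0 : ∀ i, eval 0 (F i) = 0) (hL : IsUnit (of fun i j => eval 0 (pderiv j (F i))).det)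
    (r : NNReal) :
    LipschitzOnWith r
      (fun x => ((of fun i j => eval 0 (pderiv j (F i)))⁻¹ *ᵥ fun i => eval x (F i)) - x)
      (closedBall 0 r) := by
  set L := of fun i j => eval 0 (pderiv j (F i))
  have hlip := L⁻¹.lipschitzWith_mulVec.comp_lipschitzOnWith
    (lipschitzOnWith_eval_of_mem_ker_sq (fun i => sub_linearPart_mem_ker_eval_zero_sq (F i)) r)
  rw [one_mul] at hlip
  convert hlip using 1
  funext x
  have hR : (fun i => eval x (F i - C (eval 0 (F i)) - ∑ j, C (L i j) * X j)) =
      (fun i => eval x (F i)) - L *ᵥ x := by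
    ext i
    simp only [map_sub, map_sum, map_mul, eval_C, eval_X, h0, sub_zero, Pi.sub_apply,
      mulVec, dotProduct]
  change _ = L⁻¹ *ᵥ fun i => eval x (F i - C (eval 0 (F i)) - ∑ j, C (L i j) * X j)
  rw [hR, mulVec_sub, mulVec_mulVec, nonsing_inv_mul L hL, one_mulVec]

theorem bijOn_closedBall_of_lipschitzOnWith_sub_id {E : Type*} [NormedAddCommGroup E]
    [IsUltrametricDist E] [CompleteSpace E] {f : E → E} {r : ℝ} {K : NNReal} (hK : K < 1)
    (hf0 : f 0 = 0) (hf : LipschitzOnWith K (fun x => f x - x) (closedBall 0 r)) :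
    BijOn f (closedBall 0 r) (closedBall 0 r) := by
  have hnorm := lipschitzOnWith_iff_norm_sub_le.mp hf
  have hK1 : (K : ℝ) < 1 := hK
  have hsmall : ∀ x ∈ closedBall (0 : E) r, ‖f x - x‖ ≤ r := fun x hx => by
    have := hnorm hx (mem_closedBall_self ((norm_nonneg x).trans (mem_closedBall_zero_iff.mp hx)))
    simp only [hf0, sub_zero] at this
    nlinarith [mem_closedBall_zero_iff.mp hx, norm_nonneg x, K.coe_nonneg]
  refine ⟨fun x hx => ?_, fun x hx y hy hxy => ?_, fun z hz => ?_⟩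
  · rw [mem_closedBall_zero_iff, ← add_sub_cancel x (f x)]
    exact (IsUltrametricDist.norm_add_le_max _ _).trans
      (max_le (mem_closedBall_zero_iff.mp hx) (hsmall x hx))
  · have h := hnorm hx hy
    rw [hxy, sub_sub_sub_cancel_left, norm_sub_rev] at h
    have : ‖x - y‖ = 0 := by nlinarith [norm_nonneg (x - y)]
    exact sub_eq_zero.mp (norm_eq_zero.mp this)
  · have hmaps : MapsTo (fun x => z - (f x - x)) (closedBall 0 r) (closedBall 0 r) :=
      fun x hx => by
        rw [mem_closedBall_zero_iff]
        change ‖z - (f x - x)‖ ≤ r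
        rw [sub_eq_add_neg]
        refine (IsUltrametricDist.norm_add_le_max _ _).trans (max_le ?_ ?_)
        · exact mem_closedBall_zero_iff.mp hz
        · rw [norm_neg]; exact hsmall x hx
    have hlip : LipschitzOnWith K (fun x => z - (f x - x)) (closedBall 0 r) :=
      lipschitzOnWith_iff_norm_sub_le.mpr fun x hx y hy => by
        rw [sub_sub_sub_cancel_left, norm_sub_rev x y]
        exact hnorm hy hx
    obtain ⟨y, hy, hfix, -⟩ := ContractingWith.exists_fixedPoint' isClosed_closedBall.isComplete
      hmaps ⟨hK, hlip.mapsToRestrict hmaps⟩ hz (edist_ne_top _ _)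
    have hz : z = y + (f y - y) := sub_eq_iff_eq_add.mp hfix.eq
    exact ⟨y, hy, by rw [hz, add_sub_cancel]⟩

theorem stmt_11_general (p : ℕ) [Fact p.Prime] (m n : ℕ) (hm : 1 ≤ m)
    (F : Fin n → MvPolynomial (Fin n) ℤ_[p])
    (h0 : ∀ i, MvPolynomial.eval (0 : Fin n → ℤ_[p]) (F i) = 0)
    (M : Set (Fin n → ℤ_[p]))
    (hM : M = {x | ∀ i, x i ∈ Ideal.span {(p : ℤ_[p]) ^ m}})
    (hJ : ∀ x ∈ M, IsUnit (Matrix.det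
        (Matrix.of fun i j => MvPolynomial.eval x (MvPolynomial.pderiv j (F i))))) :
    (∀ x ∈ M, ∀ i, MvPolynomial.eval x (F i) ∈ Ideal.span {(p : ℤ_[p]) ^ m}) ∧
    Set.BijOn (fun x i => MvPolynomial.eval x (F i)) M M := by
  set r : NNReal := (p : NNReal) ^ (-(m : ℤ)) with hr
  have hr1 : r < 1 :=
    zpow_lt_one_of_neg₀ (by exact_mod_cast (Fact.out : p.Prime).one_lt) (by omega)
  have hmem : ∀ a : ℤ_[p], a ∈ Ideal.span {(p : ℤ_[p]) ^ m} ↔ ‖a‖ ≤ r := fun a => by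
    rw [← PadicInt.norm_le_pow_iff_mem_span_pow, hr, NNReal.coe_zpow, NNReal.coe_natCast]
  obtain rfl : M = closedBall 0 r := by
    ext x
    simp only [hM, mem_ofPred_eq, mem_closedBall_zero_iff, hmem,
      pi_norm_le_iff_of_nonneg r.coe_nonneg]
  refine ⟨fun x hx i => (hmem _).mpr ((norm_eval_le_of_mem_ker (h0 i) x).trans
    (mem_closedBall_zero_iff.mp hx)), ?_⟩
  set L := of fun i j => eval 0 (pderiv j (F i))
  have hL : IsUnit L.det := hJ 0 (mem_closedBall_self r.coe_nonneg)
  have hnewton : BijOn (fun x => L⁻¹ *ᵥ fun i => eval x (F i)) (closedBall 0 r) (closedBall 0 r) :=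
    bijOn_closedBall_of_lipschitzOnWith_sub_id hr1 (by simp only [h0]; exact mulVec_zero _)
      (lipschitzOnWith_inv_jacobian_mulVec_sub_id h0 hL r)
  convert (bijOn_mulVec_closedBall hL r).comp hnewton using 1
  funext x
  simp only [Function.comp_apply, mulVec_mulVec, mul_nonsing_inv L hL, one_mulVec]

/-- Multivariate Hensel lemma: a polynomial map f : (p^mℤ_p)ⁿ → ℤ_pⁿ with f(0) = 0
and everywhere-unit Jacobian maps M := (p^mℤ_p)ⁿ into itself and is a bijection
M → M. -/
theorem stmt_11 (p : ℕ) [Fact p.Prime] (m n : ℕ) (hm : 1 ≤ m) (hn : 1 ≤ n)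
    (F : Fin n → MvPolynomial (Fin n) ℤ_[p])
    (h0 : ∀ i, MvPolynomial.eval (0 : Fin n → ℤ_[p]) (F i) = 0)
    (M : Set (Fin n → ℤ_[p]))
    (hM : M = {x | ∀ i, x i ∈ Ideal.span {(p : ℤ_[p]) ^ m}})
    (hJ : ∀ x ∈ M, IsUnit (Matrix.det
        (Matrix.of fun i j => MvPolynomial.eval x (MvPolynomial.pderiv j (F i))))) :
    (∀ x ∈ M, ∀ i, MvPolynomial.eval x (F i) ∈ Ideal.span {(p : ℤ_[p]) ^ m}) ∧
    Set.BijOn (fun x i => MvPolynomial.eval x (F i)) M M :=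
  stmt_11_general p m n hm F h0 M hM hJ
end

section
/- Let p be a prime and m ≥ 1. There do not exist x₁, x₂, x₁', x₂' ∈ p^m ℤ_p, an invertible diagonal matrix d ∈ GL₂(ℚ_p), and a scalar λ ∈ ℚ_p^× such that n'(x₁)·n(x₂)·w = λ · n'(x₁')·n(x₂')·d, where n'(x) = [[1,0],[x,1]], n(y) = [[1,y],[0,1]], w = [[0,1],[1,0]]. -/
/-- In PGL₂(ℚ_p)/H, the congruence cell (G/H)[m] is disjoint from its Weyl
translate: n'(x₁)n(x₂)w is never a scalar multiple of n'(x₁')n(x₂')d with d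
invertible diagonal and x₁,x₂,x₁',x₂' ∈ p^mℤ_p. -/
theorem stmt_13 (p : ℕ) [Fact p.Prime] (m : ℕ) (hm : 1 ≤ m) :
    ¬ ∃ x₁ x₂ x₁' x₂' a b lam : ℚ_[p],
      ‖x₁‖ ≤ (p : ℝ) ^ (-(m : ℤ)) ∧ ‖x₂‖ ≤ (p : ℝ) ^ (-(m : ℤ)) ∧
      ‖x₁'‖ ≤ (p : ℝ) ^ (-(m : ℤ)) ∧ ‖x₂'‖ ≤ (p : ℝ) ^ (-(m : ℤ)) ∧
      a ≠ 0 ∧ b ≠ 0 ∧ lam ≠ 0 ∧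
      !![1, 0; x₁, 1] * !![1, x₂; 0, 1] * !![0, 1; 1, 0]
        = lam • (!![1, 0; x₁', 1] * !![1, x₂'; 0, 1] * !![a, 0; 0, b]) := by
  rintro ⟨x₁, x₂, x₁', x₂', a, b, lam, h1, h2, h1', h2', ha, hb, hlam, heq⟩
  have h01 := congrFun (congrFun heq 0) 1
  have h11 := congrFun (congrFun heq 1) 1
  simp [Matrix.mul_apply, Fin.sum_univ_two] at h01 h11
  have hp : (1 : ℝ) < p := by exact_mod_cast (Fact.out : p.Prime).one_lt
  have hpm : (p : ℝ) ^ (-(m : ℤ)) < 1 := by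
    have h0 : (1 : ℝ) < (p : ℝ) ^ (m : ℤ) := by
      rw [show ((m : ℤ)) = (m : ℕ) from rfl, zpow_natCast]
      exact one_lt_pow₀ hp (by omega)
    rw [zpow_neg]
    exact inv_lt_one_of_one_lt₀ h0
  -- ‖x₁'x₂' + 1‖ = 1
  have hsmall : ‖x₁' * x₂'‖ < 1 := by
    calc ‖x₁' * x₂'‖ = ‖x₁'‖ * ‖x₂'‖ := norm_mul _ _
    _ ≤ 1 * ‖x₂'‖ := by
        apply mul_le_mul_of_nonneg_right _ (norm_nonneg _)
        exact h1'.trans hpm.le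
    _ = ‖x₂'‖ := one_mul _
    _ < 1 := lt_of_le_of_lt h2' hpm
  have hone : ‖x₁' * x₂' + 1‖ = 1 := by
    have hne : ‖x₁' * x₂'‖ ≠ ‖(1 : ℚ_[p])‖ := by rw [norm_one]; exact hsmall.ne
    rw [Padic.add_eq_max_of_ne hne, norm_one]
    exact max_eq_right hsmall.le
  have e1 : (1 : ℝ) = ‖lam‖ * (‖x₂'‖ * ‖b‖) := by
    calc (1 : ℝ) = ‖(1 : ℚ_[p])‖ := by simp
    _ = ‖lam * (x₂' * b)‖ := by rw [← h01]
    _ = ‖lam‖ * (‖x₂'‖ * ‖b‖) := by rw [norm_mul, norm_mul]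
  have e2 : ‖x₁‖ = ‖lam‖ * ‖b‖ := by
    rw [h11, norm_mul, norm_mul, hone, one_mul]
  have key : (1 : ℝ) = ‖x₂'‖ * ‖x₁‖ := by rw [e2, e1]; ring
  have hx2 : ‖x₂'‖ < 1 := lt_of_le_of_lt h2' hpm
  have hx1 : ‖x₁‖ < 1 := lt_of_le_of_lt h1 hpm
  nlinarith [norm_nonneg x₂', norm_nonneg x₁]
end

section
/- Let p be a prime and m ≥ 1. Define E⁰(m) := { [[α,β],[γ,−α]] : α ∈ ℚ_p, β, γ ∈ 2α·p^m ℤ_p } ⊆ the traceless 2×2 matrices over ℚ_p. Then for every x, y ∈ p^m ℤ_p and z ∈ 1 + p^m ℤ_p, conjugation by g := n'(x)·n(y)·a(z) (with n'(x) = [[1,0],[x,1]], n(y) = [[1,y],[0,1]], a(z) = [[z,0],[0,1]]) maps E⁰(m) onto E⁰(m), i.e. g·E⁰(m)·g^{-1} = E⁰(m). -/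
/-!
Write `g = [[a, b], [c, d]]` with `‖a‖ = ‖d‖ = 1` and `‖b‖, ‖c‖ ≤ ε < 1`; the generator
`n'(x) n(y) a(z) = [[z, y], [x z, 1 + x y]]` has this shape. Every element of `E⁰` is
`α • [[1, 2s], [2t, -1]]` with `‖s‖, ‖t‖ ≤ ε`, and
`g [[1, 2s], [2t, -1]] adj(g) = [[w, 2u], [2v, -w]]`, where the ultrametric inequality makes
`w = ad + bc + 2(tbd - sac)` a unit and `‖u‖, ‖v‖ ≤ ε`.
So `Ad g` maps `E⁰` into itself; as `g⁻¹ = adj(g) / det g` has the same shape, so does `Ad g⁻¹`.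
-/

open Matrix

namespace IsUltrametricDist

variable {K : Type*} [NormedField K] [IsUltrametricDist K]

lemma norm_add_le_of_le {x y : K} {r : ℝ} (hx : ‖x‖ ≤ r) (hy : ‖y‖ ≤ r) : ‖x + y‖ ≤ r :=
  (norm_add_le_max x y).trans (max_le hx hy)

lemma norm_sub_le_of_le {x y : K} {r : ℝ} (hx : ‖x‖ ≤ r) (hy : ‖y‖ ≤ r) : ‖x - y‖ ≤ r :=
  sub_eq_add_neg x y ▸ norm_add_le_of_le hx (by rwa [norm_neg])

lemma norm_add_eq_one {x y : K} (hx : ‖x‖ = 1) (hy : ‖y‖ < 1) : ‖x + y‖ = 1 := by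
  rw [norm_add_eq_max_of_norm_ne_norm (by rw [hx]; exact hy.ne'), hx, max_eq_left hy.le]

end IsUltrametricDist

lemma norm_mul_le_of_le_one {K : Type*} [NormedField K] {x y : K} {r : ℝ} (hx : ‖x‖ ≤ r)
    (hy : ‖y‖ ≤ 1) : ‖x * y‖ ≤ r := by
  simpa using norm_mul_le_of_le hx hy

section Cone

variable {K : Type*} [NormedField K]

def nearDiagonalCone (ε : ℝ) : Set (Matrix (Fin 2) (Fin 2) K) :=
  {A | ∃ α s t : K, ‖s‖ ≤ ε ∧ ‖t‖ ≤ ε ∧ A = α • !![1, 2 * s; 2 * t, -1]}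

lemma setOf_eq_nearDiagonalCone (ε : ℝ) :
    {A : Matrix (Fin 2) (Fin 2) K | ∃ α β γ : K,
        (∃ t : K, ‖t‖ ≤ ε ∧ β = 2 * α * t) ∧ (∃ t : K, ‖t‖ ≤ ε ∧ γ = 2 * α * t) ∧
        A = !![α, β; γ, -α]} = nearDiagonalCone ε := by
  have smul_eq : ∀ α s t : K, α • !![1, 2 * s; 2 * t, -1] = !![α, 2 * α * s; 2 * α * t, -α] := by
    intro α s t
    ext i j
    fin_cases i <;> fin_cases j <;> simp [mul_left_comm, mul_assoc]
  ext A
  constructor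
  · rintro ⟨α, _, _, ⟨s, hs, rfl⟩, ⟨t, ht, rfl⟩, rfl⟩
    exact ⟨α, s, t, hs, ht, (smul_eq α s t).symm⟩
  · rintro ⟨α, s, t, hs, ht, rfl⟩
    exact ⟨α, _, _, ⟨s, hs, rfl⟩, ⟨t, ht, rfl⟩, smul_eq α s t⟩

lemma smul_mem_nearDiagonalCone {ε : ℝ} {A : Matrix (Fin 2) (Fin 2) K}
    (hA : A ∈ nearDiagonalCone ε) (c : K) : c • A ∈ nearDiagonalCone ε := by
  obtain ⟨α, s, t, hs, ht, rfl⟩ := hA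
  exact ⟨c * α, s, t, hs, ht, smul_smul c α _⟩

lemma mem_nearDiagonalCone_of_norm {ε : ℝ} {w u v : K} (hw : ‖w‖ = 1) (hu : ‖u‖ ≤ ε)
    (hv : ‖v‖ ≤ ε) : !![w, 2 * u; 2 * v, -w] ∈ nearDiagonalCone ε := by
  have hw0 : w ≠ 0 := norm_ne_zero_iff.mp (by rw [hw]; exact one_ne_zero)
  refine ⟨w, u / w, v / w, by rwa [norm_div, hw, div_one], by rwa [norm_div, hw, div_one], ?_⟩
  ext i j
  fin_cases i <;> fin_cases j <;> simp [field]

end Cone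

lemma mul_traceless_mul_adjugate_fin_two {R : Type*} [CommRing R] (a b c d s t : R) :
    !![a, b; c, d] * !![1, 2 * s; 2 * t, -1] * !![d, -b; -c, a]
      = !![a * d + b * c + 2 * (t * b * d - s * a * c), 2 * (s * a ^ 2 - t * b ^ 2 - a * b);
          2 * (t * d ^ 2 - s * c ^ 2 + c * d), -(a * d + b * c + 2 * (t * b * d - s * a * c))] := by
  simp only [mul_fin_two, EmbeddingLike.apply_eq_iff_eq, vecCons_inj, and_true]
  refine ⟨⟨?_, ?_⟩, ?_, ?_⟩ <;> ring

lemma inv_fin_two_of {K : Type*} [Field K] (a b c d : K) :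
    !![a, b; c, d]⁻¹ = (a * d - b * c)⁻¹ • !![d, -b; -c, a] := by
  rw [inv_def, det_fin_two_of, adjugate_fin_two_of, Ring.inverse_eq_inv']

section Conjugation

variable {K : Type*} [NormedField K] [IsUltrametricDist K] {ε : ℝ} {a b c d s t : K}

lemma norm_det_fin_two_eq_one (hε : ε < 1) (ha : ‖a‖ = 1) (hd : ‖d‖ = 1) (hb : ‖b‖ ≤ ε)
    (hc : ‖c‖ ≤ ε) : ‖a * d - b * c‖ = 1 := by
  rw [sub_eq_add_neg]
  exact IsUltrametricDist.norm_add_eq_one (by rw [norm_mul, ha, hd, one_mul])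
    (by rw [norm_neg]; exact (norm_mul_le_of_le_one hb (hc.trans hε.le)).trans_lt hε)

lemma norm_conj_diag_eq_one (hε : ε < 1) (ha : ‖a‖ = 1) (hd : ‖d‖ = 1) (hb : ‖b‖ ≤ ε)
    (hc : ‖c‖ ≤ ε) (hs : ‖s‖ ≤ ε) (ht : ‖t‖ ≤ ε) :
    ‖a * d + b * c + 2 * (t * b * d - s * a * c)‖ = 1 := by
  have h2 : ‖(2 : K)‖ ≤ 1 := by simpa using IsUltrametricDist.norm_natCast_le_one K 2
  have htbd : ‖t * b * d‖ ≤ ε :=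
    norm_mul_le_of_le_one (norm_mul_le_of_le_one ht (hb.trans hε.le)) hd.le
  have hsac : ‖s * a * c‖ ≤ ε :=
    norm_mul_le_of_le_one (norm_mul_le_of_le_one hs ha.le) (hc.trans hε.le)
  have hrest : ‖b * c + 2 * (t * b * d - s * a * c)‖ ≤ ε :=
    IsUltrametricDist.norm_add_le_of_le (norm_mul_le_of_le_one hb (hc.trans hε.le))
      (mul_comm (2 : K) _ ▸
        norm_mul_le_of_le_one (IsUltrametricDist.norm_sub_le_of_le htbd hsac) h2)
  rw [add_assoc]
  exact IsUltrametricDist.norm_add_eq_one (by rw [norm_mul, ha, hd, one_mul]) (hrest.trans_lt hε)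

lemma norm_conj_offDiag_le (ha : ‖a‖ ≤ 1) (hb : ‖b‖ ≤ 1) (hab : ‖a * b‖ ≤ ε) (hs : ‖s‖ ≤ ε)
    (ht : ‖t‖ ≤ ε) : ‖s * a ^ 2 - t * b ^ 2 - a * b‖ ≤ ε := by
  refine IsUltrametricDist.norm_sub_le_of_le (IsUltrametricDist.norm_sub_le_of_le ?_ ?_) hab
  · exact norm_mul_le_of_le_one hs (by rw [norm_pow]; exact pow_le_one₀ (norm_nonneg a) ha)
  · exact norm_mul_le_of_le_one ht (by rw [norm_pow]; exact pow_le_one₀ (norm_nonneg b) hb)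

theorem conj_mem_nearDiagonalCone (hε : ε < 1) (ha : ‖a‖ = 1) (hd : ‖d‖ = 1) (hb : ‖b‖ ≤ ε)
    (hc : ‖c‖ ≤ ε) {A : Matrix (Fin 2) (Fin 2) K} (hA : A ∈ nearDiagonalCone ε) :
    !![a, b; c, d] * A * !![a, b; c, d]⁻¹ ∈ nearDiagonalCone ε := by
  obtain ⟨α, s, t, hs, ht, rfl⟩ := hA
  rw [inv_fin_two_of, Matrix.mul_smul, Matrix.mul_smul, Matrix.smul_mul,
    mul_traceless_mul_adjugate_fin_two, smul_smul]
  refine smul_mem_nearDiagonalCone (mem_nearDiagonalCone_of_norm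
    (norm_conj_diag_eq_one hε ha hd hb hc hs ht) ?_ ?_) _
  · exact norm_conj_offDiag_le ha.le (hb.trans hε.le)
      (mul_comm a b ▸ norm_mul_le_of_le_one hb ha.le) hs ht
  · rw [← norm_neg, show -(t * d ^ 2 - s * c ^ 2 + c * d) = s * c ^ 2 - t * d ^ 2 - c * d by ring]
    exact norm_conj_offDiag_le (hc.trans hε.le) hd.le (norm_mul_le_of_le_one hc hd.le) hs ht

theorem image_conj_nearDiagonalCone (hε : ε < 1) (ha : ‖a‖ = 1) (hd : ‖d‖ = 1) (hb : ‖b‖ ≤ ε)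
    (hc : ‖c‖ ≤ ε) :
    (fun A => !![a, b; c, d] * A * !![a, b; c, d]⁻¹) '' nearDiagonalCone ε =
      nearDiagonalCone ε := by
  have hδ : ‖a * d - b * c‖ = 1 := norm_det_fin_two_eq_one hε ha hd hb hc
  have hg : IsUnit !![a, b; c, d].det := by
    rw [det_fin_two_of, isUnit_iff_ne_zero, ← norm_ne_zero_iff, hδ]
    exact one_ne_zero
  have hg_inv : !![a, b; c, d]⁻¹ = !![d / (a * d - b * c), -b / (a * d - b * c);
      -c / (a * d - b * c), a / (a * d - b * c)] := by
    rw [inv_fin_two_of]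
    ext i j
    fin_cases i <;> fin_cases j <;> simp [div_eq_inv_mul]
  refine Set.Subset.antisymm ?_ fun A hA => ?_
  · rintro _ ⟨A, hA, rfl⟩
    exact conj_mem_nearDiagonalCone hε ha hd hb hc hA
  refine ⟨!![a, b; c, d]⁻¹ * A * !![a, b; c, d]⁻¹⁻¹, ?_, ?_⟩
  · rw [hg_inv]
    exact conj_mem_nearDiagonalCone hε (by simp [hδ, hd]) (by simp [hδ, ha]) (by simpa [hδ])
      (by simpa [hδ]) hA
  · simp only [nonsing_inv_nonsing_inv _ hg, Matrix.mul_assoc, mul_nonsing_inv_cancel_left _ _ hg,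
      mul_nonsing_inv _ hg, Matrix.mul_one]

end Conjugation

/-- Conjugation by elements n'(x)n(y)a(z) of the m-th principal congruence subgroup
preserves the near-diagonal cone E⁰(m) of traceless 2×2 matrices over ℚ_p. -/
theorem stmt_19 (p : ℕ) [Fact p.Prime] (m : ℕ) (hm : 1 ≤ m)
    (E0 : Set (Matrix (Fin 2) (Fin 2) ℚ_[p]))
    (hE0 : E0 = {A | ∃ α β γ : ℚ_[p],
        (∃ t : ℚ_[p], ‖t‖ ≤ (p : ℝ) ^ (-(m : ℤ)) ∧ β = 2 * α * t) ∧
        (∃ t : ℚ_[p], ‖t‖ ≤ (p : ℝ) ^ (-(m : ℤ)) ∧ γ = 2 * α * t) ∧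
        A = !![α, β; γ, -α]})
    (x y z : ℚ_[p])
    (hx : ‖x‖ ≤ (p : ℝ) ^ (-(m : ℤ))) (hy : ‖y‖ ≤ (p : ℝ) ^ (-(m : ℤ)))
    (hz : ‖z - 1‖ ≤ (p : ℝ) ^ (-(m : ℤ))) :
    (fun A => (!![1, 0; x, 1] * !![1, y; 0, 1] * !![z, 0; 0, 1]) * A
        * (!![1, 0; x, 1] * !![1, y; 0, 1] * !![z, 0; 0, 1])⁻¹) '' E0 = E0 := by
  subst hE0
  have hε : (p : ℝ) ^ (-(m : ℤ)) < 1 :=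
    zpow_lt_one_of_neg₀ (by exact_mod_cast (Fact.out : p.Prime).one_lt) (by omega)
  have hz_norm : ‖z‖ = 1 := by
    simpa using IsUltrametricDist.norm_add_eq_one norm_one (hz.trans_lt hε)
  have hxy_norm : ‖1 + x * y‖ = 1 :=
    IsUltrametricDist.norm_add_eq_one norm_one
      ((norm_mul_le_of_le_one hx (hy.trans hε.le)).trans_lt hε)
  have hg : !![1, 0; x, 1] * !![1, y; 0, 1] * !![z, 0; 0, 1] = !![z, y; x * z, 1 + x * y] := by
    simp [add_comm]
  rw [setOf_eq_nearDiagonalCone, hg]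
  exact image_conj_nearDiagonalCone hε hz_norm hxy_norm hy (by rwa [norm_mul, hz_norm, mul_one])
end
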